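/- arXiv:math/0607253 — 2 statements merged into one kernel-verified Lean document; each statement's English description precedes it below -/
import Mathlib

section
/- (Large deviation upper bound.) Suppose ∫_{[0,∞)} e^{θx} dF(x) < ∞ for some θ > 0, and let h : ℕ → ℕ satisfy lim_{n→∞} h(n)/ln n = +∞. Let β = inf{v ≥ 0 : ℙ[t(e) ≤ v] > 0}. Then for every closed subset 𝓕 of [β,+∞), limsup_{n→∞} (1/(n^{d−1}h(n))) ln ℙ[φ_{n^{d−1},h(n)}/n^{d−1} ∈ 𝓕] ≤ −inf_{𝓕} ψ. -/
open MeasureTheory ProbabilityTheory Filter Set Topology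
open scoped ENNReal NNReal symmDiff

noncomputable section

namespace FirstPassagePercolation

/-! ### The lattice and its edges.
The ambient dimension of the paper is `d = D + 1` (so `d ≥ 2` reads `1 ≤ D`);
the last coordinate is the vertical one. -/

/-- Vertices of `ℤ^(D+1)`. -/
abbrev V (D : ℕ) := Fin (D + 1) → ℤ

/-- Two vertices are adjacent (joined by an edge of `𝔼^d`) iff their `L¹` distance is `1`. -/
def adj {D : ℕ} (x y : V D) : Prop := (∑ i, |x i - y i|) = 1

/-- The unordered pairs of vertices which are edges of the lattice. -/
def IsEdge {D : ℕ} (e : Sym2 (V D)) : Prop := ∃ x y : V D, e = s(x, y) ∧ adj x y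

/-- The type of edges of the lattice. -/
abbrev Edge (D : ℕ) := {e : Sym2 (V D) // IsEdge e}

/-- A configuration of capacities; only the values on edges are relevant. -/
abbrev Config (D : ℕ) := Sym2 (V D) → ℝ

/-- The open segment joining two lattice points, inside `ℝ^(D+1)`. -/
def seg {D : ℕ} (x y : V D) : Set (Fin (D + 1) → ℝ) :=
  {p | ∃ s : ℝ, 0 < s ∧ s < 1 ∧ ∀ i, p i = (1 - s) * (x i : ℝ) + s * (y i : ℝ)}

/-- The edge joining `x` and `y` is included in the region `R` of `ℝ^(D+1)`:
they are adjacent and the open segment joining them lies in `R`. -/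
def edgeIn {D : ℕ} (R : Set (Fin (D + 1) → ℝ)) (x y : V D) : Prop :=
  adj x y ∧ seg x y ⊆ R

/-! ### Boxes, streams and maximal flows. -/

/-- The box `∏_{i<D} (aᵢ, bᵢ] × (m₀, m₁]`, as a subset of `ℝ^(D+1)`. -/
def box {D : ℕ} (a b : Fin D → ℤ) (m₀ m₁ : ℤ) : Set (Fin (D + 1) → ℝ) :=
  {p | (∀ i : Fin D, (a i : ℝ) < p i.castSucc ∧ p i.castSucc ≤ (b i : ℝ)) ∧
    (m₀ : ℝ) < p (Fin.last D) ∧ p (Fin.last D) ≤ (m₁ : ℝ)}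

/-- The lattice points of the box `∏ (aᵢ, bᵢ] × (m₀, m₁]`. -/
def memBox {D : ℕ} (a b : Fin D → ℤ) (m₀ m₁ : ℤ) (x : V D) : Prop :=
  (∀ i : Fin D, a i < x i.castSucc ∧ x i.castSucc ≤ b i) ∧
    m₀ < x (Fin.last D) ∧ x (Fin.last D) ≤ m₁

/-- The `i`-th coordinate vector. -/
def unit {D : ℕ} (i : Fin (D + 1)) : V D := fun j => if j = i then 1 else 0

/-- A stream `(g, o)` in the box `∏ (aᵢ, bᵢ] × (m₀, m₁]`, encoded by the skew-symmetric
function `f`, where `f x y` is the net amount of fluid flowing from `x` to `y`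
(`f x y = g e` if `o e` is oriented from `x` to `y`, and `- g e` otherwise):
`g` is nonnegative, bounded by the capacities on the edges included in the box, supported
on those edges, and fluid is conserved at every vertex of the box not on the top face. -/
structure IsStream {D : ℕ} (t : Config D) (a b : Fin D → ℤ) (m₀ m₁ : ℤ)
    (f : V D → V D → ℝ) : Prop where
  skew : ∀ x y, f x y = - f y x
  supported : ∀ x y, f x y ≠ 0 → edgeIn (box a b m₀ m₁) x y
  capacity : ∀ x y, edgeIn (box a b m₀ m₁) x y → f x y ≤ t s(x, y)
  conservation : ∀ x : V D, memBox a b m₀ m₁ x → x (Fin.last D) ≠ m₁ →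
    (∑ i : Fin (D + 1), (f x (x + unit i) + f x (x - unit i))) = 0

/-- The vertex over the base point `y` at height `h`. -/
def vert {D : ℕ} (y : Fin D → ℤ) (h : ℤ) : V D := Fin.snoc y h

/-- The lattice points of the base rectangle `∏ (aᵢ, bᵢ]`. -/
def base {D : ℕ} (a b : Fin D → ℤ) : Finset (Fin D → ℤ) :=
  Finset.Icc (fun i => a i + 1) b

/-- The value of a stream: the net amount of fluid entering the top face `F_{m₁}`. -/
def streamValue {D : ℕ} (a b : Fin D → ℤ) (m₁ : ℤ) (f : V D → V D → ℝ) : ℝ :=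
  ∑ y ∈ base a b, f (vert y (m₁ - 1)) (vert y m₁)

/-- The maximal flow `φ_B` from the bottom to the top of the box `∏ (aᵢ, bᵢ] × (m₀, m₁]`. -/
def maxFlow {D : ℕ} (t : Config D) (a b : Fin D → ℤ) (m₀ m₁ : ℤ) : ℝ :=
  sSup {v | ∃ f, IsStream t a b m₀ m₁ f ∧ v = streamValue a b m₁ f}

/-- `φ_{n^{d-1}, h}` : the maximal flow through the cylinder `(0,n]^{d-1} × (0,h]`
from its bottom to its top. -/
def phi {D : ℕ} (t : Config D) (n h : ℕ) : ℝ :=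
  maxFlow t (fun _ => 0) (fun _ => (n : ℤ)) 0 (h : ℤ)

/-! ### The discretized capacities. -/

/-- The discretized capacities `t^k(e) = ⌊k t(e)⌋ / k`. -/
def discConfig {D : ℕ} (k : ℕ) (t : Config D) : Config D :=
  fun e => (⌊(k : ℝ) * t e⌋ : ℝ) / (k : ℝ)

/-- `φ^k_{n^{d-1}, h}` : the maximal flow for the discretized capacities `t^k`. -/
def phiK {D : ℕ} (k : ℕ) (t : Config D) (n h : ℕ) : ℝ := phi (discConfig k t) n h

/-- A discrete stream (for the discretized capacities `t^k`), as arising from a family of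
edge-disjoint paths in the multigraph where each edge `e` is replaced by `k t^k(e)` parallel
unit-capacity copies: it is a stream for `t^k` whose values are in `ℕ/k`, every edge with an
endpoint at the bottom (resp. top) level is oriented away from the bottom (resp. towards the
top), and `g` vanishes on edges lying in the top face. -/
structure IsDiscreteStream {D : ℕ} (t : Config D) (k : ℕ) (a b : Fin D → ℤ) (m₀ m₁ : ℤ)
    (f : V D → V D → ℝ) : Prop where
  stream : IsStream (discConfig k t) a b m₀ m₁ f
  values : ∀ x y, ∃ m : ℕ, |f x y| = (m : ℝ) / (k : ℝ)
  bottomOut : ∀ x y : V D, x (Fin.last D) = m₀ → adj x y → 0 ≤ f x y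
  topIn : ∀ x y : V D, y (Fin.last D) = m₁ → x (Fin.last D) ≠ m₁ → adj x y → 0 ≤ f x y
  topZero : ∀ x y : V D, x (Fin.last D) = m₁ → y (Fin.last D) = m₁ → f x y = 0

/-- The truncated projection `π^{λ,n}_{h'}(g, x)` of a (discrete) stream on the vertical edge
above the base point `x` between the heights `h'` and `h' + 1`. -/
def proj {D : ℕ} (lam : ℝ) (n : ℕ) (h' : ℤ) (f : V D → V D → ℝ) (x : Fin D → ℤ) : ℝ :=
  min (f (vert x h') (vert x (h' + 1))) ((⌊lam * (n : ℝ) ^ D⌋ : ℝ) + 1)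

/-! ### Cuts and the constant `ν`. -/

/-- A path in the region `R` from `x` to `y` avoiding the set of edges `E`. -/
def pathAvoid {D : ℕ} (R : Set (Fin (D + 1) → ℝ)) (E : Set (Sym2 (V D))) (x y : V D) : Prop :=
  ∃ (n : ℕ) (γ : ℕ → V D), γ 0 = x ∧ γ n = y ∧
    ∀ i < n, edgeIn R (γ i) (γ (i + 1)) ∧ s(γ i, γ (i + 1)) ∉ E

/-- The infinite cylinder `S × ℝ` over the base rectangle `S = ∏ (aᵢ, bᵢ]`. -/
def cylinder {D : ℕ} (a b : Fin D → ℤ) : Set (Fin (D + 1) → ℝ) :=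
  {p | ∀ i : Fin D, (a i : ℝ) < p i.castSucc ∧ p i.castSucc ≤ (b i : ℝ)}

/-- The lattice points of the infinite cylinder `S × ℝ`. -/
def memCylinder {D : ℕ} (a b : Fin D → ℤ) (x : V D) : Prop :=
  ∀ i : Fin D, a i < x i.castSucc ∧ x i.castSucc ≤ b i

/-- `E` is a set of edges of `S × ℝ` separating `-∞` from `+∞` over `S`: for some `N > 0`
there is no path from `S × {-N}` to `S × {N}` in `(S × ℝ) ∖ E`. -/
def Separates {D : ℕ} (a b : Fin D → ℤ) (E : Set (Sym2 (V D))) : Prop :=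
  (∀ e ∈ E, ∃ x y, e = s(x, y) ∧ edgeIn (cylinder a b) x y) ∧
  ∃ N : ℤ, 0 < N ∧ ∀ x y : V D,
    memCylinder a b x → x (Fin.last D) = -N →
    memCylinder a b y → y (Fin.last D) = N →
    ¬ pathAvoid (cylinder a b) E x y

/-- A cut over `S`: a separating set of edges, no proper subset of which separates. -/
def IsCutOver {D : ℕ} (a b : Fin D → ℤ) (E : Set (Sym2 (V D))) : Prop :=
  Separates a b E ∧ ∀ E' ⊂ E, ¬ Separates a b E'

/-- The inner vertex boundary `∂ⁱⁿ (S × ℝ)` of the infinite cylinder. -/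
def innerBdry {D : ℕ} (a b : Fin D → ℤ) : Set (V D) :=
  {x | memCylinder a b x ∧ ∃ y : V D, adj x y ∧ ¬ memCylinder a b y}

/-- Condition `(*)` : the edges of `E` with both endpoints on the inner boundary of `S × ℝ`
are vertical edges contained in `ℝ^{d-1} × [0,1]`. -/
def CondStar {D : ℕ} (a b : Fin D → ℤ) (E : Set (Sym2 (V D))) : Prop :=
  ∀ e ∈ E, (∃ x y, e = s(x, y) ∧ x ∈ innerBdry a b ∧ y ∈ innerBdry a b) →
    ∃ x : V D, e = s(x, x + unit (Fin.last D)) ∧ x (Fin.last D) = 0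

/-- `τ(S) = inf { V(E) | E is a cut over S satisfying (*) }`, with `V(E) = ∑_{e ∈ E} t(e)`,
valued in `[0, +∞]`. -/
def tauRect {D : ℕ} (t : Config D) (a b : Fin D → ℤ) : ℝ≥0∞ :=
  ⨅ E : {E : Set (Sym2 (V D)) // IsCutOver a b E ∧ CondStar a b E},
    ∑' e : E.val, ENNReal.ofReal (t e.val)

/-- `τ_{k^{d-1}} = τ((0,k]^{d-1})`. -/
def tau {D : ℕ} (t : Config D) (k : ℕ) : ℝ≥0∞ :=
  tauRect t (fun _ => 0) (fun _ => (k : ℤ))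

/-! ### Probabilistic set-up. -/

/-- The random capacities `(t(e), e ∈ 𝔼^d)` are nonnegative, independent and identically
distributed, with common distribution (function `F`, i.e. law) `ρ`. -/
def IIDCapacities {D : ℕ} {Ω : Type*} [MeasurableSpace Ω] (P : Measure Ω)
    (t : Ω → Config D) (ρ : Measure ℝ) : Prop :=
  (∀ ω e, 0 ≤ t ω e) ∧ ρ (Set.Iio 0) = 0 ∧
    iIndepFun (m := fun _ : Edge D => (inferInstance : MeasurableSpace ℝ))
      (fun (e : Edge D) ω => t ω e.val) P ∧
    ∀ e : Edge D, Measure.map (fun ω => t ω e.val) P = ρ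

open Classical in
/-- `- ln p ∈ [0, +∞]`, for `p ∈ [0,1]` (equal to `+∞` iff `p = 0`). -/
def negLog (p : ℝ≥0∞) : ℝ≥0∞ :=
  if p = 0 then ⊤ else ENNReal.ofReal (- Real.log p.toReal)

/-- The height function satisfies `lim_n h(n) / ln n = +∞`. -/
def HGrowth (h : ℕ → ℕ) : Prop :=
  Tendsto (fun n => (h n : ℝ) / Real.log n) atTop atTop

/-- The sequence `- (1 / (n^{d-1} h(n))) ln ℙ[φ_{n^{d-1},h(n)} ≥ λ n^{d-1}]`. -/
def psiSeq {D : ℕ} {Ω : Type*} [MeasurableSpace Ω] (P : Measure Ω) (t : Ω → Config D)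
    (h : ℕ → ℕ) (lam : ℝ) (n : ℕ) : ℝ≥0∞ :=
  negLog (P {ω | lam * (n : ℝ) ^ D ≤ phi (t ω) n (h n)}) /
    ((n : ℝ≥0∞) ^ D * (h n : ℝ≥0∞))

/-- `β = inf {v ≥ 0 | ℙ[t(e) ≤ v] > 0}`. -/
def betaOf (ρ : Measure ℝ) : ℝ := sInf {v : ℝ | 0 ≤ v ∧ 0 < ρ (Set.Iic v)}

/-- `μ = sup {λ | F([0,λ)) < 1}`. -/
def muSup (ρ : Measure ℝ) : ℝ := sSup {x : ℝ | ρ (Set.Iio x) < 1}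

lemma negLog_antitone : Antitone negLog := by
  intro p q hpq
  unfold negLog
  split_ifs with hq hp hp
  · exact le_rfl
  · exact absurd (le_antisymm (hq ▸ hpq) zero_le) hp
  · exact le_top
  rcases eq_or_ne q ⊤ with rfl | hq_top
  · simp -- `negLog ⊤ = 0` through the junk values `⊤.toReal = 0` and `Real.log 0 = 0`
  have hp_top : p ≠ ⊤ := ne_top_of_le_ne_top hq_top hpq
  exact ENNReal.ofReal_le_ofReal <| neg_le_neg <| Real.log_le_log
    (ENNReal.toReal_pos hp hp_top) ((ENNReal.toReal_le_toReal hp_top hq_top).mpr hpq)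

lemma betaOf_nonneg (ρ : Measure ℝ) : 0 ≤ betaOf ρ :=
  Real.sInf_nonneg fun _ hv => hv.1

lemma setOf_div_mem_subset_setOf_sInf_mul_le {α : Type*} {F : Set ℝ} (hF : BddBelow F)
    {c : ℝ} (hc : 0 < c) (g : α → ℝ) :
    {a | g a / c ∈ F} ⊆ {a | sInf F * c ≤ g a} :=
  fun _ ha => (le_div_iff₀ hc).mp (csInf_le hF ha)

/-- Stated (after changing signs) as `inf_𝓕 ψ ≤ liminf (1/(n^{d-1}h(n))) (- ln ℙ[φ/n^{d-1} ∈ 𝓕])`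
in `[0, +∞]`. Since `ℙ[φ/n^{d-1} ∈ 𝓕] ≤ ℙ[φ ≥ λ₀ n^{d-1}]` for `λ₀ = min 𝓕`, the bound is
`ψ(λ₀) ≥ inf_𝓕 ψ`. -/
theorem ldp_upper_bound_general
    (D : ℕ) (Ω : Type*) [MeasurableSpace Ω]
    (P : Measure Ω)
    (t : Ω → Config D) (ρ : Measure ℝ)
    (h : ℕ → ℕ)
    (psi : ℝ → ℝ≥0∞)
    (hpsi : ∀ lam : ℝ, 0 ≤ lam → Tendsto (psiSeq P t h lam) atTop (𝓝 (psi lam)))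
    (F : Set ℝ) (hFc : IsClosed F) (hFs : F ⊆ Set.Ici (betaOf ρ)) :
    (⨅ lam ∈ F, psi lam) ≤
      Filter.liminf (fun n : ℕ =>
        negLog (P {ω | phi (t ω) n (h n) / (n : ℝ) ^ D ∈ F}) /
          ((n : ℝ≥0∞) ^ D * (h n : ℝ≥0∞))) atTop := by
  rcases F.eq_empty_or_nonempty with rfl | hF
  · have hrate (n : ℕ) : negLog 0 / ((n : ℝ≥0∞) ^ D * (h n : ℝ≥0∞)) = ⊤ := by
      rw [negLog, if_pos rfl]
      exact ENNReal.top_div_of_ne_top (by finiteness)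
    simp [hrate]
  have hbdd : BddBelow F := ⟨betaOf ρ, hFs⟩
  have hmin : sInf F ∈ F := hFc.csInf_mem hF hbdd
  have hrate : ∀ᶠ n : ℕ in atTop, psiSeq P t h (sInf F) n ≤
      negLog (P {ω | phi (t ω) n (h n) / (n : ℝ) ^ D ∈ F}) /
        ((n : ℝ≥0∞) ^ D * (h n : ℝ≥0∞)) := by
    filter_upwards [eventually_ge_atTop 1] with n hn
    have hn_pos : (0 : ℝ) < (n : ℝ) ^ D := by positivity
    exact ENNReal.div_le_div_right (negLog_antitone (measure_mono
      (setOf_div_mem_subset_setOf_sInf_mul_le hbdd hn_pos _))) _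
  calc (⨅ lam ∈ F, psi lam) ≤ psi (sInf F) := iInf₂_le _ hmin
    _ = liminf (psiSeq P t h (sInf F)) atTop :=
      ((hpsi _ ((betaOf_nonneg ρ).trans (hFs hmin))).liminf_eq).symm
    _ ≤ _ := liminf_le_liminf hrate

/-- large deviation upper bound: for every closed subset `𝓕` of `[β, ∞)`,
`limsup (1/(n^{d-1}h(n))) ln ℙ[φ/n^{d-1} ∈ 𝓕] ≤ - inf_𝓕 ψ`, stated here (after changing
signs) as `inf_𝓕 ψ ≤ liminf (1/(n^{d-1}h(n))) (- ln ℙ[φ/n^{d-1} ∈ 𝓕])` in `[0, +∞]`. -/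
theorem ldp_upper_bound
    (D : ℕ) (hD : 1 ≤ D) (Ω : Type*) [MeasurableSpace Ω]
    (P : Measure Ω) [IsProbabilityMeasure P]
    (t : Ω → Config D) (ρ : Measure ℝ) [IsProbabilityMeasure ρ]
    (hcap : IIDCapacities P t ρ)
    (hexp : ∃ θ : ℝ, 0 < θ ∧ ∫⁻ x, ENNReal.ofReal (Real.exp (θ * x)) ∂ρ ≠ ⊤)
    (h : ℕ → ℕ) (hh : HGrowth h)
    (psi : ℝ → ℝ≥0∞)
    (hpsi : ∀ lam : ℝ, 0 ≤ lam → Tendsto (psiSeq P t h lam) atTop (𝓝 (psi lam)))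
    (F : Set ℝ) (hFc : IsClosed F) (hFs : F ⊆ Set.Ici (betaOf ρ)) :
    (⨅ lam ∈ F, psi lam) ≤
      Filter.liminf (fun n : ℕ =>
        negLog (P {ω | phi (t ω) n (h n) / (n : ℝ) ^ D ∈ F}) /
          ((n : ℝ≥0∞) ^ D * (h n : ℝ≥0∞))) atTop :=
  ldp_upper_bound_general D Ω P t ρ h psi hpsi F hFc hFs

end FirstPassagePercolation
end
end

section
/- (Subadditivity of τ.) Fix a configuration of capacities. If S₁ and S₂ are two disjoint hyper-rectangles in ℤ^{d−1} having a common side, so that S₁ ∪ S₂ is also a hyper-rectangle, then τ(S₁ ∪ S₂) ≤ τ(S₁) + τ(S₂). -/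
open MeasureTheory ProbabilityTheory Filter Set Topology
open scoped ENNReal NNReal symmDiff

noncomputable section

namespace FirstPassagePercolation

/-!
Keep from a cut `E₁` over `S₁` and a cut `E₂` over `S₂`, both satisfying `(*)`, the edges with
both endpoints in their own cylinder. Their union `E₀` separates over `S = S₁ ∪ S₂`: along a
path in `S × ℝ` starting far below, every point stays joined to the bottom either in `S₁ × ℝ`
avoiding `E₁` or in `S₂ × ℝ` avoiding `E₂`. Where the path crosses the common face, the columns
on both sides lie on the inner boundaries of `S₁ × ℝ` and `S₂ × ℝ`, which `(*)` cuts only at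
height `0`; so the crossing happens at height `≤ 0` (else the path would go on up to the top in
the old cylinder) and the column on the new side leads freely down. By minimality a cut lies
within the band where it separates, so `E₀` is finite and contains a minimal separating subset
`F`: a cut over `S` inheriting `(*)`, with `V(F) ≤ V(E₁) + V(E₂)`.
-/

open Relation

theorem _root_.Relation.ReflTransGen.exists_Icc_crossing {α : Type*} {r : α → α → Prop}
    {f : α → ℤ} (hf : ∀ u v, r u v → f v ≤ f u + 1 ∧ f u ≤ f v + 1) {lo hi : ℤ} (hlt : lo < hi)
    {x y : α} (h : ReflTransGen r x y) (hx : f x ≤ lo) (hy : hi ≤ f y) :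
    ∃ x' y', f x' = lo ∧ f y' = hi ∧
      ReflTransGen (fun u v => r u v ∧ f u ∈ Icc lo hi ∧ f v ∈ Icc lo hi) x' y' := by
  set band := fun u v => r u v ∧ f u ∈ Icc lo hi ∧ f v ∈ Icc lo hi
  suffices ∀ z, ReflTransGen r x z → f z ≤ lo ∨
      (∃ x' y', f x' = lo ∧ f y' = hi ∧ ReflTransGen band x' y') ∨
      ∃ x', f x' = lo ∧ f z ∈ Icc lo hi ∧ ReflTransGen band x' z by
    rcases this y h with hy' | hdone | ⟨x', hx', hyb, hb⟩
    · omega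
    · exact hdone
    · exact ⟨x', y, hx', le_antisymm hyb.2 hy, hb⟩
  intro z hz
  induction hz with
  | refl => exact Or.inl hx
  | @tail u v _ huv ih =>
    have hstep := hf u v huv
    rcases ih with hu | hdone | ⟨x', hx', ⟨hu₀, hu₁⟩, hb⟩
    · by_cases hv : f v ≤ lo
      · exact Or.inl hv
      · refine Or.inr (Or.inr ⟨u, by omega, ⟨by omega, by omega⟩, .single ⟨huv, ?_, ?_⟩⟩) <;>
          exact ⟨by omega, by omega⟩
    · exact Or.inr (Or.inl hdone)
    · by_cases hui : f u = hi
      · exact Or.inr (Or.inl ⟨x', u, hx', hui, hb⟩)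
      by_cases hv : f v ≤ lo
      · exact Or.inl hv
      · refine Or.inr (Or.inr ⟨x', hx', ⟨by omega, by omega⟩, hb.tail ⟨huv, ?_, ?_⟩⟩) <;>
          exact ⟨by omega, by omega⟩

section Lattice

variable {D : ℕ} {x y : V D}

theorem adj.symm (h : adj x y) : adj y x := by
  simpa only [adj, abs_sub_comm] using h

theorem adj.coord_le (h : adj x y) (k : Fin (D + 1)) : x k ≤ y k + 1 ∧ y k ≤ x k + 1 := by
  have := (Finset.single_le_sum (fun i _ => abs_nonneg (x i - y i)) (Finset.mem_univ k)).trans_eq h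
  obtain ⟨h₁, h₂⟩ := abs_le.mp this
  omega

theorem adj.eq_of_ne (h : adj x y) {k : Fin (D + 1)} (hk : x k ≠ y k) {k' : Fin (D + 1)}
    (hk' : k' ≠ k) : x k' = y k' := by
  have hsplit := Finset.add_sum_erase Finset.univ (fun i => |x i - y i|) (Finset.mem_univ k)
  have hone : 1 ≤ |x k - y k| := Int.one_le_abs (sub_ne_zero.mpr hk)
  have hle := Finset.single_le_sum (f := fun i => |x i - y i|) (fun i _ => abs_nonneg _)
    (Finset.mem_erase.mpr ⟨hk', Finset.mem_univ k'⟩)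
  have hzero : |x k' - y k'| = 0 := by
    unfold adj at h
    linarith [abs_nonneg (x k' - y k')]
  exact sub_eq_zero.mp (abs_eq_zero.mp hzero)

def setLast (x : V D) (h : ℤ) : V D := Function.update x (Fin.last D) h

@[simp] theorem setLast_last (h : ℤ) : setLast x h (Fin.last D) = h :=
  Function.update_self _ _ _

@[simp] theorem setLast_castSucc (h : ℤ) (i : Fin D) : setLast x h i.castSucc = x i.castSucc :=
  Function.update_of_ne (Fin.castSucc_lt_last i).ne _ _

@[simp] theorem setLast_self : setLast x (x (Fin.last D)) = x :=
  Function.update_eq_self _ _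

theorem adj_setLast_succ (x : V D) (h : ℤ) : adj (setLast x h) (setLast x (h + 1)) := by
  simp [adj, Fin.sum_univ_castSucc]

theorem adj.setLast (hxy : adj x y) (hlast : x (Fin.last D) = y (Fin.last D)) (h : ℤ) :
    adj (setLast x h) (setLast y h) := by
  unfold adj at *
  rw [Fin.sum_univ_castSucc] at hxy ⊢
  simpa [hlast] using hxy

end Lattice

section Cylinder

variable {D : ℕ} {a b a' b' : Fin D → ℤ} {x y : V D}

@[simp] theorem memCylinder_setLast {h : ℤ} :
    memCylinder a b (setLast x h) ↔ memCylinder a b x := by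
  simp [memCylinder]

theorem memCylinder.mono (ha : a ≤ a') (hb : b' ≤ b) (hx : memCylinder a' b' x) :
    memCylinder a b x :=
  fun i => ⟨(ha i).trans_lt (hx i).1, (hx i).2.trans (hb i)⟩

theorem cylinder_mono (ha : a ≤ a') (hb : b' ≤ b) : cylinder a' b' ⊆ cylinder a b :=
  fun _ hp i => ⟨lt_of_le_of_lt (by exact_mod_cast ha i) (hp i).1,
    (hp i).2.trans (by exact_mod_cast hb i)⟩

theorem last_eq_of_adj (h : adj x y) (hx : memCylinder a b x) (hy : ¬ memCylinder a b y) :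
    x (Fin.last D) = y (Fin.last D) := by
  by_contra hne
  exact hy fun i => h.eq_of_ne hne (Fin.castSucc_lt_last i).ne ▸ hx i

theorem seg_comm (x y : V D) : seg x y = seg y x := by
  ext p
  constructor <;> rintro ⟨s, h0, h1, hp⟩ <;>
    exact ⟨1 - s, by linarith, by linarith, fun i => by rw [hp i]; ring⟩

theorem edgeIn.symm {R : Set (Fin (D + 1) → ℝ)} (h : edgeIn R x y) : edgeIn R y x :=
  ⟨h.1.symm, seg_comm x y ▸ h.2⟩

theorem edgeIn.mono {R R' : Set (Fin (D + 1) → ℝ)} (hR : R ⊆ R') (h : edgeIn R x y) :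
    edgeIn R' x y :=
  ⟨h.1, h.2.trans hR⟩

theorem edgeIn_cylinder_of_memCylinder (hx : memCylinder a b x) (hy : memCylinder a b y)
    (hadj : adj x y) : edgeIn (cylinder a b) x y := by
  refine ⟨hadj, ?_⟩
  rintro p ⟨s, hs0, hs1, hp⟩ i
  have hax : (a i : ℝ) < x i.castSucc := by exact_mod_cast (hx i).1
  have hay : (a i : ℝ) < y i.castSucc := by exact_mod_cast (hy i).1
  have hbx : (x i.castSucc : ℝ) ≤ b i := by exact_mod_cast (hx i).2
  have hby : (y i.castSucc : ℝ) ≤ b i := by exact_mod_cast (hy i).2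
  rw [hp i.castSucc]
  constructor <;> nlinarith

/-- The midpoint of the edge, in doubled coordinates, lies in the cylinder. -/
theorem edgeIn_cylinder_bounds (h : edgeIn (cylinder a b) x y) (i : Fin D) :
    2 * a i < x i.castSucc + y i.castSucc ∧ x i.castSucc + y i.castSucc ≤ 2 * b i := by
  obtain ⟨h₁, h₂⟩ := h.2 ⟨1 / 2, by norm_num, by norm_num, fun _ => rfl⟩ i
  constructor
  · exact_mod_cast (by linarith : (2 * a i : ℝ) < x i.castSucc + y i.castSucc)
  · exact_mod_cast (by linarith : (x i.castSucc + y i.castSucc : ℝ) ≤ 2 * b i)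

theorem edgeIn_cylinder_closed (h : edgeIn (cylinder a b) x y) (i : Fin D) :
    a i ≤ x i.castSucc ∧ x i.castSucc ≤ b i := by
  have := edgeIn_cylinder_bounds h i
  have := h.1.coord_le i.castSucc
  omega

theorem edgeIn_cylinder_eq_succ_of_not_mem (h : edgeIn (cylinder a b) x y) {i : Fin D}
    (hi : x i.castSucc ∉ Ioc (a i) (b i)) : y i.castSucc = x i.castSucc + 1 := by
  rw [mem_Ioc] at hi
  have := edgeIn_cylinder_bounds h i
  have := h.1.coord_le i.castSucc
  omega

theorem eq_of_edgeIn_cylinder_of_not_memCylinder (hx : ¬ memCylinder a b x) {y z : V D}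
    (hy : edgeIn (cylinder a b) x y) (hz : edgeIn (cylinder a b) x z) : y = z := by
  obtain ⟨i, hi⟩ := not_forall.mp hx
  have hyi := edgeIn_cylinder_eq_succ_of_not_mem hy hi
  have hzi := edgeIn_cylinder_eq_succ_of_not_mem hz hi
  funext k
  by_cases hk : k = i.castSucc
  · subst hk; omega
  · exact (hy.1.eq_of_ne (by omega) hk).symm.trans (hz.1.eq_of_ne (by omega) hk)

theorem memCylinder_or_of_edgeIn (h : edgeIn (cylinder a b) x y) :
    memCylinder a b x ∨ memCylinder a b y := by
  by_contra! ⟨hx, hy⟩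
  obtain ⟨i, hi⟩ := not_forall.mp hx
  obtain ⟨i', hi'⟩ := not_forall.mp hy
  have hyi := edgeIn_cylinder_eq_succ_of_not_mem h hi
  have hxi' := edgeIn_cylinder_eq_succ_of_not_mem h.symm hi'
  by_cases hii' : i' = i
  · subst hii'; omega
  · have := h.1.eq_of_ne (k := i.castSucc) (by omega)
      (fun h' => hii' (Fin.castSucc_injective _ h'))
    omega

end Cylinder

section Paths

variable {D : ℕ} {a b : Fin D → ℤ} {E : Set (Sym2 (V D))} {x y : V D}

theorem pathAvoid_iff_reflTransGen {R : Set (Fin (D + 1) → ℝ)} :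
    pathAvoid R E x y ↔ ReflTransGen (fun u v => edgeIn R u v ∧ s(u, v) ∉ E) x y := by
  constructor
  · rintro ⟨n, γ, rfl, rfl, hγ⟩
    induction n generalizing γ with
    | zero => rfl
    | succ n ih =>
      exact .head (hγ 0 n.succ_pos) (ih (fun k => γ (k + 1)) fun i hi => hγ (i + 1) (by omega))
  · intro h
    induction h using Relation.ReflTransGen.head_induction_on with
    | refl => exact ⟨0, fun _ => y, rfl, rfl, by simp⟩
    | @head u v huv _ ih =>
      obtain ⟨n, γ, hγ0, hγn, hγ⟩ := ih
      refine ⟨n + 1, fun k => if k = 0 then u else γ (k - 1), by simp, by simp [hγn], ?_⟩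
      rintro (_ | i) hi
      · simpa [hγ0] using huv
      · simpa using hγ i (by omega)

def CylinderStep (a b : Fin D → ℤ) (E : Set (Sym2 (V D))) (u v : V D) : Prop :=
  memCylinder a b u ∧ memCylinder a b v ∧ adj u v ∧ s(u, v) ∉ E

theorem memCylinder_of_reflTransGen (hx : memCylinder a b x)
    (h : ReflTransGen (CylinderStep a b E) x y) : memCylinder a b y := by
  rcases h.cases_tail with rfl | ⟨_, _, hstep⟩
  exacts [hx, hstep.2.1]

/-- A path of `pathAvoid` may pass through lattice points of the closed cylinder lying outside
`S × ℝ`, but each of them has a single edge in the cylinder, so it can be cut out. -/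
theorem reflTransGen_cylinderStep_of_pathAvoid (hx : memCylinder a b x)
    (hy : memCylinder a b y) (h : pathAvoid (cylinder a b) E x y) :
    ReflTransGen (CylinderStep a b E) x y := by
  rw [pathAvoid_iff_reflTransGen] at h
  suffices ∀ z, ReflTransGen (fun u v => edgeIn (cylinder a b) u v ∧ s(u, v) ∉ E) x z →
      (memCylinder a b z → ReflTransGen (CylinderStep a b E) x z) ∧
      (¬ memCylinder a b z → ∀ w, edgeIn (cylinder a b) z w →
        ReflTransGen (CylinderStep a b E) x w) from (this y h).1 hy
  intro z hz
  induction hz with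
  | refl => exact ⟨fun _ => .refl, fun h => absurd hx h⟩
  | @tail u v _ huv ih =>
    by_cases hu : memCylinder a b u
    · refine ⟨fun hv => (ih.1 hu).tail ⟨hu, hv, huv.1.1, huv.2⟩, fun hv w hw => ?_⟩
      rw [eq_of_edgeIn_cylinder_of_not_memCylinder hv hw huv.1.symm]
      exact ih.1 hu
    · have hv := (memCylinder_or_of_edgeIn huv.1).resolve_left hu
      exact ⟨fun _ => ih.2 hu v huv.1, fun h => absurd hv h⟩

theorem pathAvoid_cylinder_iff (hx : memCylinder a b x) (hy : memCylinder a b y) :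
    pathAvoid (cylinder a b) E x y ↔ ReflTransGen (CylinderStep a b E) x y :=
  ⟨reflTransGen_cylinderStep_of_pathAvoid hx hy, fun h => pathAvoid_iff_reflTransGen.mpr
    (ReflTransGen.mono (fun _ _ huv =>
      ⟨edgeIn_cylinder_of_memCylinder huv.1 huv.2.1 huv.2.2.1, huv.2.2.2⟩) _ _ h)⟩

theorem reflTransGen_setLast (hx : memCylinder a b x) {h₀ h₁ : ℤ} (hle : h₀ ≤ h₁)
    (hE : ∀ h, h₀ ≤ h → h < h₁ → s(setLast x h, setLast x (h + 1)) ∉ E) :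
    ReflTransGen (CylinderStep a b E) (setLast x h₀) (setLast x h₁) := by
  refine ReflTransGen.lift (setLast x) (fun _ _ => id) _ _
    (reflTransGen_of_succ_of_le (fun h h' => CylinderStep a b E (setLast x h) (setLast x h'))
      (fun h hh => ?_) hle)
  rw [Order.succ_eq_add_one]
  exact ⟨memCylinder_setLast.mpr hx, memCylinder_setLast.mpr hx, adj_setLast_succ x h,
    hE h hh.1 hh.2⟩

theorem CondStar.setLast_not_mem (hstar : CondStar a b E) (hx : x ∈ innerBdry a b) {h : ℤ}
    (hh : h ≠ 0) : s(setLast x h, setLast x (h + 1)) ∉ E := by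
  obtain ⟨hxS, y, hxy, hyS⟩ := hx
  have hbdry : ∀ h', setLast x h' ∈ innerBdry a b := fun h' =>
    ⟨memCylinder_setLast.mpr hxS, setLast y h', hxy.setLast (last_eq_of_adj hxy hxS hyS) h',
      fun hy' => hyS (memCylinder_setLast.mp hy')⟩
  intro hE
  obtain ⟨z, hz, hz0⟩ := hstar _ hE ⟨_, _, rfl, hbdry h, hbdry (h + 1)⟩
  rcases Sym2.eq_iff.mp hz with ⟨h₁, -⟩ | ⟨h₁, h₂⟩
  · exact hh (by simpa [hz0] using congrFun h₁ (Fin.last D))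
  · have e₁ := congrFun h₁ (Fin.last D)
    have e₂ := congrFun h₂ (Fin.last D)
    simp [unit] at e₁ e₂
    omega

end Paths

section Separation

variable {D : ℕ} {a b : Fin D → ℤ} {E F : Set (Sym2 (V D))} {N : ℤ}

def SeparatesAt (a b : Fin D → ℤ) (E : Set (Sym2 (V D))) (N : ℤ) : Prop :=
  ∀ x y : V D, memCylinder a b x → x (Fin.last D) ≤ -N → memCylinder a b y →
    N ≤ y (Fin.last D) → ¬ ReflTransGen (CylinderStep a b E) x y

def HeightBounded (E : Set (Sym2 (V D))) (N : ℤ) : Prop :=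
  ∀ e ∈ E, ∀ u ∈ e, -N ≤ u (Fin.last D) ∧ u (Fin.last D) ≤ N

theorem HeightBounded.mono {M : ℤ} (h : HeightBounded E N) (hFE : F ⊆ E) (hNM : N ≤ M) :
    HeightBounded F M :=
  fun e he u hu => (h e (hFE he) u hu).imp (by omega) (by omega)

theorem HeightBounded.union {M : ℤ} (hE : HeightBounded E N) (hF : HeightBounded F M) :
    HeightBounded (E ∪ F) (max N M) := by
  rintro e (he | he)
  exacts [(hE.mono subset_rfl (le_max_left N M)) e he, (hF.mono subset_rfl (le_max_right N M)) e he]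

theorem HeightBounded.setLast_not_mem (hbd : HeightBounded E N) (x : V D) {h : ℤ}
    (hh : h < -N ∨ N ≤ h) : s(setLast x h, setLast x (h + 1)) ∉ E := fun hE => by
  have h₁ := hbd _ hE _ (Sym2.mem_mk_left _ _)
  have h₂ := hbd _ hE _ (Sym2.mem_mk_right _ _)
  simp only [setLast_last] at h₁ h₂
  omega

theorem HeightBounded.finite
    (hcl : ∀ e ∈ E, ∃ x y, e = s(x, y) ∧ edgeIn (cylinder a b) x y)
    (hbd : HeightBounded E N) : E.Finite := by
  set B : Set (V D) := Icc (Fin.snoc a (-N)) (Fin.snoc b N)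
  have hB : ∀ e ∈ E, ∀ x y, e = s(x, y) → edgeIn (cylinder a b) x y → x ∈ B := by
    rintro e he x y rfl hxy
    have hlast := hbd _ he x (Sym2.mem_mk_left _ _)
    constructor <;> intro k <;> induction k using Fin.lastCases with
    | last => simp [hlast]
    | cast i => simp [edgeIn_cylinder_closed hxy i]
  have hBfin : B.Finite := finite_Icc _ _
  refine ((hBfin.prod hBfin).image fun p : V D × V D => s(p.1, p.2)).subset ?_
  intro e he
  obtain ⟨x, y, rfl, hxy⟩ := hcl e he
  exact ⟨(x, y), ⟨hB _ he x y rfl hxy, hB _ he y x Sym2.eq_swap hxy.symm⟩, rfl⟩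

theorem exists_reflTransGen_band (hN : 0 < N) {x y : V D} (hx : x (Fin.last D) ≤ -N)
    (hy : N ≤ y (Fin.last D)) (h : ReflTransGen (CylinderStep a b E) x y) :
    ∃ x' y', memCylinder a b x' ∧ x' (Fin.last D) = -N ∧ memCylinder a b y' ∧
      y' (Fin.last D) = N ∧
      ReflTransGen (fun u v => CylinderStep a b E u v ∧ u (Fin.last D) ∈ Icc (-N) N ∧
        v (Fin.last D) ∈ Icc (-N) N) x' y' := by
  obtain ⟨x', y', hx', hy', hb⟩ := h.exists_Icc_crossing
    (fun u v huv => (huv.2.2.1.coord_le (Fin.last D)).symm) (by omega) hx hy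
  have hne : x' ≠ y' := by rintro rfl; omega
  rcases hb.cases_head with rfl | ⟨_, hfirst, _⟩
  · exact absurd rfl hne
  rcases hb.cases_tail with rfl | ⟨_, _, hlast⟩
  · exact absurd rfl hne
  exact ⟨x', y', hfirst.1.1, hx', hlast.1.2.1, hy', hb⟩

theorem SeparatesAt.separates (hcl : ∀ e ∈ E, ∃ x y, e = s(x, y) ∧ edgeIn (cylinder a b) x y)
    (hN : 0 < N) (h : SeparatesAt a b E N) : Separates a b E :=
  ⟨hcl, N, hN, fun x y hx hxN hy hyN hxy =>
    h x y hx hxN.le hy hyN.ge ((pathAvoid_cylinder_iff hx hy).mp hxy)⟩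

theorem Separates.exists_separatesAt (h : Separates a b E) : ∃ N, 0 < N ∧ SeparatesAt a b E N := by
  obtain ⟨-, N, hN, hsep⟩ := h
  refine ⟨N, hN, fun x y _ hx _ hy hxy => ?_⟩
  obtain ⟨x', y', hx'S, hx', hy'S, hy', hb⟩ := exists_reflTransGen_band hN hx hy hxy
  exact hsep x' y' hx'S hx' hy'S hy'
    ((pathAvoid_cylinder_iff hx'S hy'S).mpr (ReflTransGen.mono (fun _ _ => And.left) _ _ hb))

/-- Columns are free outside the height bound, so they join the levels `±M` of any separation
witness to the half-spaces beyond `±N`. -/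
theorem Separates.separatesAt_of_heightBounded (h : Separates a b E) (hbd : HeightBounded E N) :
    SeparatesAt a b E N := by
  obtain ⟨M, -, hsepM⟩ := h.exists_separatesAt
  intro x y hx hxN hy hyN hxy
  have hdown := reflTransGen_setLast (E := E) hx (min_le_left (x (Fin.last D)) (-M))
    fun h _ hh => hbd.setLast_not_mem x (Or.inl (by omega))
  have hup := reflTransGen_setLast (E := E) hy (le_max_left (y (Fin.last D)) M)
    fun h hh _ => hbd.setLast_not_mem y (Or.inr (by omega))
  rw [setLast_self] at hdown hup
  exact hsepM _ _ (memCylinder_setLast.mpr hx) (by simp) (memCylinder_setLast.mpr hy) (by simp)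
    (hdown.trans (hxy.trans hup))

/-- An edge outside the band `[-N, N]` is never needed: a crossing path has a sub-path inside
it. -/
theorem IsCutOver.heightBounded (hcut : IsCutOver a b E) (hN : 0 < N)
    (hsep : SeparatesAt a b E N) : HeightBounded E N := by
  intro e he u hu
  by_contra hout
  refine hcut.2 (E \ {e}) (sdiff_singleton_ssubset.mpr he)
    (SeparatesAt.separates (fun e' he' => hcut.1.1 e' he'.1) hN ?_)
  intro x y _ hx _ hy hxy
  obtain ⟨x', y', hx'S, hx', hy'S, hy', hb⟩ := exists_reflTransGen_band hN hx hy hxy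
  refine hsep x' y' hx'S hx'.le hy'S hy'.ge (ReflTransGen.mono ?_ _ _ hb)
  rintro v w ⟨hvw, hv, hw⟩
  refine ⟨hvw.1, hvw.2.1, hvw.2.2.1, fun hvwE => hvw.2.2.2 ⟨hvwE, ?_⟩⟩
  rintro rfl
  rcases Sym2.mem_iff.mp hu with rfl | rfl
  exacts [hout hv, hout hw]

theorem exists_isCutOver_subset (hcl : ∀ e ∈ E, ∃ x y, e = s(x, y) ∧ edgeIn (cylinder a b) x y)
    (hN : 0 < N) (hbd : HeightBounded E N) (hsep : SeparatesAt a b E N) :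
    ∃ F ⊆ E, IsCutOver a b F := by
  have hfin : {F | F ⊆ E ∧ SeparatesAt a b F N}.Finite :=
    (hbd.finite hcl).finite_subsets.subset fun _ hF => hF.1
  obtain ⟨F, ⟨hFE, hF⟩, hmin⟩ := hfin.exists_minimal ⟨E, subset_rfl, hsep⟩
  refine ⟨F, hFE, hF.separates (fun e he => hcl e (hFE he)) hN, fun F' hF' hsep' => ?_⟩
  have hF'E := hF'.subset.trans hFE
  exact hF'.not_subset
    (hmin ⟨hF'E, hsep'.separatesAt_of_heightBounded (hbd.mono hF'E le_rfl)⟩ hF'.subset)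

end Separation

section Gluing

variable {D : ℕ} {a b a' b' c : Fin D → ℤ} {E E₁ E₂ : Set (Sym2 (V D))} {N N₁ N₂ : ℤ}
  {u v : V D}

def innerEdges (a b : Fin D → ℤ) (E : Set (Sym2 (V D))) : Set (Sym2 (V D)) :=
  {e ∈ E | ∀ u ∈ e, memCylinder a b u}

theorem CondStar.mono {F : Set (Sym2 (V D))} (h : CondStar a b E) (hFE : F ⊆ E) :
    CondStar a b F :=
  fun e he => h e (hFE he)

theorem CondStar.union {F : Set (Sym2 (V D))} (hE : CondStar a b E) (hF : CondStar a b F) :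
    CondStar a b (E ∪ F) :=
  fun e he => he.elim (hE e) (hF e)

theorem CondStar.innerEdges (hstar : CondStar a b E)
    (hsub : ∀ x, memCylinder a b x → memCylinder a' b' x) :
    CondStar a' b' (innerEdges a b E) := by
  rintro e ⟨he, hin⟩ ⟨x, y, rfl, hx, hy⟩
  have hbdry : ∀ z ∈ s(x, y), z ∈ innerBdry a' b' → z ∈ innerBdry a b :=
    fun z hz ⟨_, w, hzw, hw⟩ => ⟨hin z hz, w, hzw, fun hw' => hw (hsub w hw')⟩
  exact hstar _ he
    ⟨x, y, rfl, hbdry x (Sym2.mem_mk_left _ _) hx, hbdry y (Sym2.mem_mk_right _ _) hy⟩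

def ReachableFromBelow (a b : Fin D → ℤ) (E : Set (Sym2 (V D))) (N : ℤ) (z : V D) : Prop :=
  ∃ w, memCylinder a b w ∧ w (Fin.last D) ≤ -N ∧ ReflTransGen (CylinderStep a b E) w z

theorem ReachableFromBelow.cross {E' : Set (Sym2 (V D))} {N' : ℤ}
    (hsep : SeparatesAt a b E N) (hstar : CondStar a b E) (hstar' : CondStar a' b' E')
    (huv : adj u v) (hu' : ¬ memCylinder a' b' u) (hv : ¬ memCylinder a b v)
    (hv' : memCylinder a' b' v) (hreach : ReachableFromBelow a b E N u) :
    ReachableFromBelow a' b' E' N' v := by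
  obtain ⟨w, hw, hwN, hwu⟩ := hreach
  have hu := memCylinder_of_reflTransGen hw hwu
  have hlast := last_eq_of_adj huv hu hv
  have hu0 : u (Fin.last D) ≤ 0 := by
    by_contra! hpos
    have hup := reflTransGen_setLast (E := E) hu (le_max_left (u (Fin.last D)) N)
      fun h hh _ => hstar.setLast_not_mem ⟨hu, v, huv, hv⟩ (by omega)
    rw [setLast_self] at hup
    exact hsep w _ hw hwN (memCylinder_setLast.mpr hu) (by simp) (hwu.trans hup)
  have hdown := reflTransGen_setLast (E := E') hv' (min_le_left (v (Fin.last D)) (-N'))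
    fun h _ hh => hstar'.setLast_not_mem ⟨hv', u, huv.symm, hu'⟩ (by omega)
  rw [setLast_self] at hdown
  exact ⟨_, memCylinder_setLast.mpr hv', by simp, hdown⟩

theorem ReachableFromBelow.step (hsep : SeparatesAt a b E₁ N₁) (hstar₁ : CondStar a b E₁)
    (hstar₂ : CondStar a' b' E₂) (hdisj : ∀ x, memCylinder a b x → ¬ memCylinder a' b' x)
    (hv : memCylinder a b v ∨ memCylinder a' b' v) (huv : adj u v)
    (hE : s(u, v) ∉ innerEdges a b E₁) (hu : ReachableFromBelow a b E₁ N₁ u) :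
    ReachableFromBelow a b E₁ N₁ v ∨ ReachableFromBelow a' b' E₂ N₂ v := by
  obtain ⟨w, hw, hwN, hwu⟩ := hu
  have huS := memCylinder_of_reflTransGen hw hwu
  rcases hv with hv | hv
  · refine Or.inl ⟨w, hw, hwN, hwu.tail ⟨huS, hv, huv, fun he => hE ⟨he, fun z hz => ?_⟩⟩⟩
    rcases Sym2.mem_iff.mp hz with rfl | rfl
    exacts [huS, hv]
  · exact Or.inr (ReachableFromBelow.cross hsep hstar₁ hstar₂ huv (hdisj u huS)
      (fun h => hdisj v h hv) hv ⟨w, hw, hwN, hwu⟩)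

theorem separatesAt_innerEdges_union
    (hcover : ∀ x, memCylinder a c x → memCylinder a b x ∨ memCylinder a' b' x)
    (hdisj : ∀ x, memCylinder a b x → ¬ memCylinder a' b' x)
    (hsep₁ : SeparatesAt a b E₁ N₁) (hstar₁ : CondStar a b E₁)
    (hsep₂ : SeparatesAt a' b' E₂ N₂) (hstar₂ : CondStar a' b' E₂) :
    SeparatesAt a c (innerEdges a b E₁ ∪ innerEdges a' b' E₂) (max N₁ N₂) := by
  intro x y hx hxN _ hyN hxy
  have hreach : ∀ z, ReflTransGen (CylinderStep a c (innerEdges a b E₁ ∪ innerEdges a' b' E₂))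
      x z → ReachableFromBelow a b E₁ N₁ z ∨ ReachableFromBelow a' b' E₂ N₂ z := by
    intro z hz
    induction hz with
    | refl => exact (hcover x hx).imp (⟨x, ·, by omega, .refl⟩) (⟨x, ·, by omega, .refl⟩)
    | tail _ hstep ih =>
      rcases ih with h | h
      · exact h.step hsep₁ hstar₁ hstar₂ hdisj (hcover _ hstep.2.1) hstep.2.2.1
          fun he => hstep.2.2.2 (Or.inl he)
      · exact (h.step hsep₂ hstar₂ hstar₁ (fun x h₂ h₁ => hdisj x h₁ h₂)
          (hcover _ hstep.2.1).symm hstep.2.2.1 fun he => hstep.2.2.2 (Or.inr he)).symm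
  rcases hreach y hxy with ⟨w, hw, hwN, hwy⟩ | ⟨w, hw, hwN, hwy⟩
  · exact hsep₁ w y hw hwN (memCylinder_of_reflTransGen hw hwy) (by omega) hwy
  · exact hsep₂ w y hw hwN (memCylinder_of_reflTransGen hw hwy) (by omega) hwy

theorem exists_cut_subset_union (hb : b ≤ c) (ha' : a ≤ a') (hb' : b' ≤ c)
    (hcover : ∀ x, memCylinder a c x → memCylinder a b x ∨ memCylinder a' b' x)
    (hdisj : ∀ x, memCylinder a b x → ¬ memCylinder a' b' x)
    (hcut₁ : IsCutOver a b E₁) (hstar₁ : CondStar a b E₁)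
    (hcut₂ : IsCutOver a' b' E₂) (hstar₂ : CondStar a' b' E₂) :
    ∃ F ⊆ E₁ ∪ E₂, IsCutOver a c F ∧ CondStar a c F := by
  obtain ⟨N₁, hN₁, hsep₁⟩ := hcut₁.1.exists_separatesAt
  obtain ⟨N₂, hN₂, hsep₂⟩ := hcut₂.1.exists_separatesAt
  have hsub : innerEdges a b E₁ ∪ innerEdges a' b' E₂ ⊆ E₁ ∪ E₂ :=
    union_subset_union (sep_subset _ _) (sep_subset _ _)
  have hcl : ∀ e ∈ innerEdges a b E₁ ∪ innerEdges a' b' E₂,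
      ∃ x y, e = s(x, y) ∧ edgeIn (cylinder a c) x y := by
    rintro e (⟨he, -⟩ | ⟨he, -⟩)
    · obtain ⟨x, y, rfl, hxy⟩ := hcut₁.1.1 e he
      exact ⟨x, y, rfl, hxy.mono (cylinder_mono le_rfl hb)⟩
    · obtain ⟨x, y, rfl, hxy⟩ := hcut₂.1.1 e he
      exact ⟨x, y, rfl, hxy.mono (cylinder_mono ha' hb')⟩
  have hbd := ((hcut₁.heightBounded hN₁ hsep₁).union (hcut₂.heightBounded hN₂ hsep₂)).mono
    hsub le_rfl
  obtain ⟨F, hF, hFcut⟩ := exists_isCutOver_subset hcl (lt_max_of_lt_left hN₁) hbd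
    (separatesAt_innerEdges_union hcover hdisj hsep₁ hstar₁ hsep₂ hstar₂)
  refine ⟨F, hF.trans hsub, hFcut, CondStar.mono ?_ hF⟩
  exact (hstar₁.innerEdges fun _ => memCylinder.mono le_rfl hb).union
    (hstar₂.innerEdges fun _ => memCylinder.mono ha' hb')

end Gluing

section Rectangles

variable {D : ℕ} {a b a' b' : Fin D → ℤ} {j : Fin D} {x : V D}

theorem memCylinder_or_of_memCylinder_update (hj : a' j = b j)
    (hother : ∀ i ≠ j, a' i = a i ∧ b' i = b i)
    (hx : memCylinder a (Function.update b j (b' j)) x) :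
    memCylinder a b x ∨ memCylinder a' b' x := by
  by_cases hxj : x j.castSucc ≤ b j
  · refine Or.inl fun i => ?_
    rcases eq_or_ne i j with rfl | hi
    · exact ⟨(hx i).1, hxj⟩
    · simpa [hi] using hx i
  · refine Or.inr fun i => ?_
    rcases eq_or_ne i j with rfl | hi
    · exact ⟨by omega, by simpa using (hx i).2⟩
    · rw [(hother i hi).1, (hother i hi).2]
      simpa [hi] using hx i

theorem not_memCylinder_of_memCylinder (hj : a' j = b j) (hx : memCylinder a b x) :
    ¬ memCylinder a' b' x :=
  fun hx' => by have := (hx j).2; have := (hx' j).1; omega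

end Rectangles

theorem tau_subadditive_general
    (D : ℕ) (t : Config D)
    (a b a' b' : Fin D → ℤ) (j : Fin D)
    (hab : ∀ i, a i < b i) (hab' : ∀ i, a' i < b' i)
    (hj : a' j = b j) (hother : ∀ i ≠ j, a' i = a i ∧ b' i = b i) :
    tauRect t a (Function.update b j (b' j)) ≤ tauRect t a b + tauRect t a' b' := by
  have hb : b ≤ Function.update b j (b' j) :=
    le_update_iff.mpr ⟨(hj ▸ hab' j).le, fun _ _ => le_rfl⟩
  have hb' : b' ≤ Function.update b j (b' j) :=
    le_update_iff.mpr ⟨le_rfl, fun i hi => (hother i hi).2.le⟩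
  have ha' : a ≤ a' := fun i => by
    rcases eq_or_ne i j with rfl | hi
    exacts [(hab i).le.trans_eq hj.symm, (hother i hi).1.ge]
  refine ENNReal.le_iInf_add_iInf fun E₁ E₂ => ?_
  obtain ⟨F, hF, hFcut, hFstar⟩ := exists_cut_subset_union hb ha' hb'
    (fun _ => memCylinder_or_of_memCylinder_update hj hother)
    (fun _ => not_memCylinder_of_memCylinder hj) E₁.2.1 E₁.2.2 E₂.2.1 E₂.2.2
  calc tauRect t a (Function.update b j (b' j))
      ≤ ∑' e : F, ENNReal.ofReal (t e) := iInf_le_of_le ⟨F, hFcut, hFstar⟩ le_rfl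
    _ ≤ ∑' e : ↥(E₁.1 ∪ E₂.1), ENNReal.ofReal (t e) :=
      ENNReal.tsum_mono_subtype (fun e => ENNReal.ofReal (t e)) hF
    _ ≤ _ := ENNReal.tsum_union_le (fun e => ENNReal.ofReal (t e)) E₁.1 E₂.1

/-- subadditivity of `τ`: if `S₁ = ∏(aᵢ, bᵢ]` and `S₂ = ∏(a'ᵢ, b'ᵢ]` are
two disjoint hyper-rectangles with a common side (stacked in the direction `j`), then
`τ(S₁ ∪ S₂) ≤ τ(S₁) + τ(S₂)`. -/
theorem tau_subadditive
    (D : ℕ) (hD : 1 ≤ D) (t : Config D) (ht : ∀ e, 0 ≤ t e)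
    (a b a' b' : Fin D → ℤ) (j : Fin D)
    (hab : ∀ i, a i < b i) (hab' : ∀ i, a' i < b' i)
    (hj : a' j = b j) (hother : ∀ i ≠ j, a' i = a i ∧ b' i = b i) :
    tauRect t a (Function.update b j (b' j)) ≤ tauRect t a b + tauRect t a' b' :=
  tau_subadditive_general D t a b a' b' j hab hab' hj hother

end FirstPassagePercolation
end
end
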